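/- A ratio-balanced maximum flow always exists: there is a feasible flow f that is a maximum flow and satisfies the ratio constraint. -/

import Mathlib

open Finset
open scoped Classical

variable {S A : Type*} [Fintype S] [Fintype A]

/-- A feasible flow: nonnegative on edges, zero off edges, outflow of each security
bounded by its value, inflow of each account bounded by its exposure. -/
def Feasible (E : Finset (S × A)) (v : S → ℝ) (e : A → ℝ) (f : S → A → ℝ) : Prop :=
  (∀ i j, (i, j) ∈ E → 0 ≤ f i j) ∧
  (∀ i j, (i, j) ∉ E → f i j = 0) ∧
  (∀ i : S, ∑ j ∈ Finset.univ.filter (fun j => (i, j) ∈ E), f i j ≤ v i) ∧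
  (∀ j : A, ∑ i ∈ Finset.univ.filter (fun i => (i, j) ∈ E), f i j ≤ e j)

/-- The value of a flow: total flow on all edges. -/
noncomputable def flowValue (E : Finset (S × A)) (f : S → A → ℝ) : ℝ :=
  ∑ p ∈ E, f p.1 p.2

/-- The risk ratio of account `j` under a flow `f`. -/
noncomputable def riskRatio (E : Finset (S × A)) (e : A → ℝ) (f : S → A → ℝ) (j : A) : ℝ :=
  (e j - ∑ i ∈ Finset.univ.filter (fun i => (i, j) ∈ E), f i j) / e j

/-- A maximum flow: feasible, with value maximal among feasible flows. -/
def IsMaxFlow (E : Finset (S × A)) (v : S → ℝ) (e : A → ℝ) (f : S → A → ℝ) : Prop :=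
  Feasible E v e f ∧ ∀ g : S → A → ℝ, Feasible E v e g → flowValue E g ≤ flowValue E f

/-- The ratio constraint: if `f` sends positive flow from `i` to `j` and `i` could
also be used for `l`, then the risk ratio of `j` is at least that of `l`. -/
def RatioConstraint (E : Finset (S × A)) (e : A → ℝ) (f : S → A → ℝ) : Prop :=
  ∀ i j l, (i, j) ∈ E → 0 < f i j → (i, l) ∈ E →
    riskRatio E e f l ≤ riskRatio E e f j

/-- A ratio-balanced (maximum) flow. -/
def RatioBalanced (E : Finset (S × A)) (v : S → ℝ) (e : A → ℝ) (f : S → A → ℝ) : Prop :=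
  IsMaxFlow E v e f ∧ RatioConstraint E e f

/-- The weighted sum of squared risk ratios `∑ j, e j * (r_j^f)^2`. -/
noncomputable def objective (E : Finset (S × A)) (e : A → ℝ) (f : S → A → ℝ) : ℝ :=
  ∑ j : A, e j * (riskRatio E e f j) ^ 2

/-- An MWSR flow: a feasible flow minimizing the weighted sum of squared risk
ratios among all feasible flows. -/
def MWSR (E : Finset (S × A)) (v : S → ℝ) (e : A → ℝ) (f : S → A → ℝ) : Prop :=
  Feasible E v e f ∧ ∀ g : S → A → ℝ, Feasible E v e g → objective E e f ≤ objective E e g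

/-!
The feasible flows form a nonempty compact set, so a maximum flow exists and, among the maximum
flows, one minimizing the weighted sum of squared risk ratios `objective`. Such a minimizer
satisfies the ratio constraint: if it sends flow from `i` to `j` while `r_j < r_l` for an edge
`(i, l)`, rerouting a small amount `ε` from `(i, j)` to `(i, l)` keeps the value and changes the
objective by `ε² / e_j + ε² / e_l - 2 ε (r_l - r_j) < 0`.
-/

section

variable (E : Finset (S × A))

noncomputable def inflow (f : S → A → ℝ) (j : A) : ℝ :=
  ∑ i ∈ univ.filter (fun i => (i, j) ∈ E), f i j

noncomputable def outflow (f : S → A → ℝ) (i : S) : ℝ :=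
  ∑ j ∈ univ.filter (fun j => (i, j) ∈ E), f i j

omit [Fintype A] in
theorem riskRatio_eq (e : A → ℝ) (f : S → A → ℝ) (j : A) :
    riskRatio E e f j = (e j - inflow E f j) / e j := rfl

omit [Fintype S] [Fintype A] in
theorem continuous_flowValue : Continuous fun f : S → A → ℝ => flowValue E f := by
  unfold flowValue; fun_prop

theorem continuous_objective (e : A → ℝ) : Continuous fun f : S → A → ℝ => objective E e f := by
  unfold objective riskRatio; fun_prop

theorem isClosed_setOf_feasible (v : S → ℝ) (e : A → ℝ) : IsClosed {f | Feasible E v e f} := by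
  simp only [Feasible, Set.ofPred_and, Set.ofPred_forall]
  refine .inter ?_ (.inter ?_ (.inter ?_ ?_)) <;> repeat refine isClosed_iInter fun _ => ?_
  all_goals first
    | exact isClosed_le (by fun_prop) (by fun_prop)
    | exact isClosed_eq (by fun_prop) (by fun_prop)

end

section

variable {E : Finset (S × A)} {v : S → ℝ} {e : A → ℝ} {f : S → A → ℝ}

theorem feasible_zero (hv : ∀ i, 0 ≤ v i) (he : ∀ j, 0 ≤ e j) : Feasible E v e 0 :=
  ⟨fun _ _ _ => le_rfl, fun _ _ _ => rfl, fun i => by simpa using hv i,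
    fun j => by simpa using he j⟩

theorem Feasible.mem_Icc (hf : Feasible E v e f) (he : ∀ j, 0 ≤ e j) (a : S) (b : A) :
    f a b ∈ Set.Icc 0 (e b) := by
  by_cases hab : (a, b) ∈ E
  · refine ⟨hf.1 a b hab, le_trans ?_ (hf.2.2.2 b)⟩
    exact single_le_sum (f := fun i => f i b) (fun i hi => hf.1 i b (mem_filter.1 hi).2)
      (mem_filter.2 ⟨mem_univ a, hab⟩)
  · simpa [hf.2.1 a b hab] using he b

variable (E v e) in
theorem isCompact_setOf_feasible (he : ∀ j, 0 ≤ e j) : IsCompact {f | Feasible E v e f} :=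
  (isCompact_univ_pi fun _ => isCompact_univ_pi fun _ => isCompact_Icc).of_isClosed_subset
    (isClosed_setOf_feasible E v e) fun _ hf a _ _ _ => hf.mem_Icc he a _

noncomputable def reroute (f : S → A → ℝ) (i : S) (j l : A) (ε : ℝ) : S → A → ℝ :=
  fun a b => f a b + (if (a, b) = (i, l) then ε else 0) - (if (a, b) = (i, j) then ε else 0)

variable {i : S} {j l : A} {ε : ℝ}

omit [Fintype A] in
theorem inflow_reroute (hij : (i, j) ∈ E) (hil : (i, l) ∈ E) (b : A) :
    inflow E (reroute f i j l ε) b =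
      inflow E f b + (if b = l then ε else 0) - (if b = j then ε else 0) := by
  simp only [inflow, reroute, sum_add_distrib, sum_sub_distrib, Prod.ext_iff, ite_and]
  split_ifs <;> simp_all

omit [Fintype S] in
theorem outflow_reroute (hij : (i, j) ∈ E) (hil : (i, l) ∈ E) (a : S) :
    outflow E (reroute f i j l ε) a = outflow E f a := by
  simp only [outflow, reroute, sum_add_distrib, sum_sub_distrib, Prod.ext_iff, ite_and]
  split_ifs <;> simp_all

omit [Fintype S] [Fintype A] in
theorem flowValue_reroute (hij : (i, j) ∈ E) (hil : (i, l) ∈ E) :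
    flowValue E (reroute f i j l ε) = flowValue E f := by
  simp [flowValue, reroute, sum_add_distrib, sum_sub_distrib, hij, hil]

theorem feasible_reroute (hf : Feasible E v e f) (hij : (i, j) ∈ E) (hil : (i, l) ∈ E)
    (hjl : j ≠ l) (hε : 0 ≤ ε) (hεf : ε ≤ f i j) (hεl : ε ≤ e l - inflow E f l) :
    Feasible E v e (reroute f i j l ε) := by
  obtain ⟨hnonneg, hzero, hout, hin⟩ := hf
  refine ⟨fun a b hab => ?_, fun a b hab => ?_, fun a => ?_, fun b => ?_⟩
  · have hsub : 0 ≤ f a b - (if (a, b) = (i, j) then ε else 0) := by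
      split_ifs with h
      · obtain ⟨rfl, rfl⟩ := Prod.mk.inj h
        linarith
      · simpa using hnonneg a b hab
    have hadd : 0 ≤ (if (a, b) = (i, l) then ε else 0) := by split_ifs <;> simp [hε]
    simp only [reroute]
    linarith
  · have h₁ : (a, b) ≠ (i, l) := ne_of_mem_of_not_mem hil hab |>.symm
    have h₂ : (a, b) ≠ (i, j) := ne_of_mem_of_not_mem hij hab |>.symm
    simp [reroute, h₁, h₂, hzero a b hab]
  · exact (outflow_reroute hij hil a).trans_le (hout a)
  · have : inflow E f b ≤ e b := hin b
    refine (inflow_reroute hij hil b).trans_le ?_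
    split_ifs <;> simp_all <;> linarith

omit [Fintype A] in
theorem riskRatio_reroute (hij : (i, j) ∈ E) (hil : (i, l) ∈ E) (b : A) :
    riskRatio E e (reroute f i j l ε) b =
      riskRatio E e f b + ((if b = j then ε else 0) - (if b = l then ε else 0)) / e b := by
  rw [riskRatio_eq, riskRatio_eq, inflow_reroute hij hil]
  ring

theorem objective_reroute (hij : (i, j) ∈ E) (hil : (i, l) ∈ E) (hjl : j ≠ l)
    (hej : e j ≠ 0) (hel : e l ≠ 0) :
    objective E e (reroute f i j l ε) = objective E e f + (ε ^ 2 / e j + ε ^ 2 / e l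
      - 2 * ε * (riskRatio E e f l - riskRatio E e f j)) := by
  have hl : l ∈ univ.erase j := mem_erase.2 ⟨hjl.symm, mem_univ l⟩
  simp only [objective]
  rw [← add_sum_erase _ _ (mem_univ j), ← add_sum_erase _ _ hl, ← add_sum_erase _ _ (mem_univ j),
    ← add_sum_erase _ _ hl]
  have hrest : ∑ b ∈ (univ.erase j).erase l, e b * riskRatio E e (reroute f i j l ε) b ^ 2 =
      ∑ b ∈ (univ.erase j).erase l, e b * riskRatio E e f b ^ 2 :=
    sum_congr rfl fun b hb => by
      obtain ⟨hbl, hbj⟩ := by simpa using hb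
      simp [riskRatio_reroute hij hil, hbl, hbj]
  rw [hrest]
  simp only [riskRatio_reroute hij hil, if_pos, if_neg hjl, if_neg hjl.symm]
  field_simp
  ring

theorem Feasible.riskRatio_nonneg (hf : Feasible E v e f) (hej : 0 ≤ e j) :
    0 ≤ riskRatio E e f j :=
  div_nonneg (sub_nonneg.2 (hf.2.2.2 j)) hej

theorem objective_reroute_lt (he : ∀ j, 0 < e j) (hij : (i, j) ∈ E) (hil : (i, l) ∈ E)
    (hlt : riskRatio E e f j < riskRatio E e f l) (hε : 0 < ε)
    (hεr : ε * (1 / e j + 1 / e l) ≤ riskRatio E e f l - riskRatio E e f j) :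
    objective E e (reroute f i j l ε) < objective E e f := by
  have hjl : j ≠ l := by rintro rfl; exact hlt.false
  rw [objective_reroute hij hil hjl (he j).ne' (he l).ne']
  have hsq : ε ^ 2 / e j + ε ^ 2 / e l = ε * (ε * (1 / e j + 1 / e l)) := by ring
  nlinarith [mul_le_mul_of_nonneg_left hεr hε.le, mul_pos hε (sub_pos.2 hlt)]

theorem Feasible.ratioConstraint_of_forall_objective_le (hf : Feasible E v e f)
    (he : ∀ j, 0 < e j)
    (hmin : ∀ g, Feasible E v e g → flowValue E g = flowValue E f →
      objective E e f ≤ objective E e g) :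
    RatioConstraint E e f := by
  intro i j l hij hpos hil
  by_contra! hlt
  have hjl : j ≠ l := by rintro rfl; exact hlt.false
  set d := riskRatio E e f l - riskRatio E e f j
  set c := 1 / e j + 1 / e l
  have hc : 0 < c := add_pos (one_div_pos.2 (he j)) (one_div_pos.2 (he l))
  have hroom : 0 < e l - inflow E f l := by
    have := (hf.riskRatio_nonneg (he j).le).trans_lt hlt
    rwa [riskRatio_eq, div_pos_iff_of_pos_right (he l)] at this
  set ε := min (f i j) (min (e l - inflow E f l) (d / c))
  have hε : 0 < ε := lt_min hpos (lt_min hroom (div_pos (sub_pos.2 hlt) hc))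
  have hεd : ε * c ≤ d := (le_div_iff₀ hc).1 ((min_le_right _ _).trans (min_le_right _ _))
  have hg := feasible_reroute hf hij hil hjl hε.le (min_le_left _ _)
    ((min_le_right _ _).trans (min_le_left _ _))
  exact (objective_reroute_lt he hij hil hlt hε hεd).not_ge
    (hmin _ hg (flowValue_reroute hij hil))

end

/-- A ratio-balanced maximum flow always exists. -/
theorem ratioBalanced_exists (E : Finset (S × A)) (v : S → ℝ) (e : A → ℝ)
    (hv : ∀ i, 0 ≤ v i) (he : ∀ j, 0 < e j) :
    ∃ f : S → A → ℝ, RatioBalanced E v e f := by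
  have he₀ : ∀ j, 0 ≤ e j := fun j => (he j).le
  have hK := isCompact_setOf_feasible E v e he₀
  obtain ⟨f₀, hf₀, hmax⟩ :=
    hK.exists_isMaxOn ⟨0, feasible_zero hv he₀⟩ (continuous_flowValue E).continuousOn
  obtain ⟨f, ⟨hf, hval⟩, hmin⟩ :=
    (hK.inter_right (isClosed_eq (continuous_flowValue E) continuous_const)).exists_isMinOn
      ⟨f₀, hf₀, rfl⟩ (continuous_objective E e).continuousOn
  refine ⟨f, ⟨hf, fun g hg => hval ▸ hmax hg⟩, ?_⟩
  exact hf.ratioConstraint_of_forall_objective_le he fun g hg hgv => hmin ⟨hg, hgv.trans hval⟩
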